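/- For all n ≥ 2 and h ≥ 1, every element s of the Kadourek inverse semigroup S_n^{(h)} satisfies s² = s³. -/

import Mathlib

universe u v

/-- Formal inverse of a word in letters `(variable, inverted?)`. -/
def invFree (w : List (List ℕ × Bool)) : List (List ℕ × Bool) :=
  w.reverse.map (fun p => (p.1, !p.2))

/-- The letter sequence of the `{·,⁻¹}`-term `w_n^{(h)}` (`h ≥ 1`), letters being pairs
`(variable, inverted?)` with variables indexed by `h`-tuples from `{0,…,n-1}`. -/
def wLetters (n : ℕ) : ℕ → List (List ℕ × Bool)
  | 0 => []
  | 1 => (List.range n).map (fun i => ([i], false)) ++ (List.range n).map (fun i => ([i], true))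
  | h + 2 =>
    ((List.range n).map (fun j => (wLetters n (h + 1)).map (fun p => (p.1 ++ [j], p.2)))).flatten
      ++ ((List.range n).map
        (fun j => invFree ((wLetters n (h + 1)).map (fun p => (p.1 ++ [j], p.2))))).flatten

/-- Partial transformations of the set `{0, 1, …, |w_n^{(h)}|}`. -/
def PTrans (n h : ℕ) : Type :=
  Fin ((wLetters n h).length + 1) → Option (Fin ((wLetters n h).length + 1))

/-- Composition of partial maps: `pcomp f g` is "apply `g`, then `f`". -/
def pcomp {α : Type*} (f g : α → Option α) : α → Option α := fun q => (g q).bind f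

/-- The inverse of a partial injective map on `Fin N`. -/
def pinv {N : ℕ} (f : Fin N → Option (Fin N)) : Fin N → Option (Fin N) :=
  fun q => (List.finRange N).find? (fun p => decide (f p = some q))

/-- Kadourek's generator `χ_v`: it sends `q-1 ↦ q` exactly when the `q`-th letter of
`w_n^{(h)}` is `x_v`, and `q ↦ q-1` exactly when the `q`-th letter of `w_n^{(h)}` is `x_v⁻¹`. -/
def chi (n h : ℕ) (v : List ℕ) : PTrans n h := fun a =>
  if h1 : a.val < (wLetters n h).length ∧ (wLetters n h)[a.val]? = some (v, false) then
    some ⟨a.val + 1, by have := h1.1; omega⟩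
  else if 0 < a.val ∧ (wLetters n h)[a.val - 1]? = some (v, true) then
    some ⟨a.val - 1, by have := a.isLt; omega⟩
  else none

/-- Membership in Kadourek's inverse semigroup `S_n^{(h)}`: the closure of the generators
`χ_v` (`v` an `h`-tuple over `{0,…,n-1}`) and their inverses under composition. -/
inductive SnhMem (n h : ℕ) : PTrans n h → Prop
  | gen : ∀ v : List ℕ, v.length = h → (∀ i ∈ v, i < n) → SnhMem n h (chi n h v)
  | geninv : ∀ v : List ℕ, v.length = h → (∀ i ∈ v, i < n) → SnhMem n h (pinv (chi n h v))
  | mul : ∀ f g : PTrans n h, SnhMem n h f → SnhMem n h g → SnhMem n h (pcomp f g)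

/-!
Send a position `q` of the term `w = w_n^{(h)}` to the free-group element `w[0,q)`. Each generator
`χ_v`, hence each `s ∈ S_n^{(h)}`, multiplies these elements on the right by a fixed `g`. Since `w`
is reduced, `w[0,q)⁻¹ w[0,q')` is the reduced word `w[q,q')` or its inverse, so if `s` maps
`q ↦ q₁ ↦ q₂` then `|q₁ - q| = |q₂ - q₁|` is the length of `g`. Either `q₂ = q`, so `g² = 1` and
`g = 1` as free groups are torsion-free, or the two consecutive factors between `q`, `q₁`, `q₂`
spell the same word, a square in `w`, which is impossible because `w` is square-free. Hence
`q₁ = q` whenever `s²(q)` is defined, and `s² = s³`.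

That `w_n^{(h+1)}` is cyclically reduced and square-free follows by induction on `h`: a letter in
the `k`-th of its `2n` blocks has last index `k mod n`. This confines a square to a single block,
a relabelled copy of `w_n^{(h)}` or of its inverse, unless it consists of the two halves of the
whole term, whose first letters differ because `w_n^{(h)}` is cyclically reduced.
-/

namespace Kadourek

open FreeGroup

section SquareFree

variable {α β : Type*}

def SquareFree (W : List α) : Prop :=
  ∀ a d, a + 2 * d ≤ W.length → (∀ i < d, W[a + i]? = W[a + d + i]?) → d = 0

theorem SquareFree.map {f : α → β} (hf : f.Injective) {W : List α} (hW : SquareFree W) :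
    SquareFree (W.map f) := fun a d hlen hsq =>
  hW a d (by simpa using hlen) fun i hi =>
    Option.map_injective hf (by simpa only [List.getElem?_map] using hsq i hi)

theorem SquareFree.reverse {W : List α} (hW : SquareFree W) : SquareFree W.reverse := by
  intro a d hlen hsq
  rw [List.length_reverse] at hlen
  refine hW (W.length - a - 2 * d) d (by omega) fun i hi => ?_
  have := hsq (d - 1 - i) (by omega)
  rw [List.getElem?_reverse (by omega), List.getElem?_reverse (by omega)] at this
  convert this.symm using 2 <;> omega

theorem SquareFree.invRev {W : List (α × Bool)} (hW : SquareFree W) :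
    SquareFree (FreeGroup.invRev W) :=
  (hW.map fun p q h => by simpa [Prod.ext_iff] using h).reverse

end SquareFree

section Prefixes

variable {α : Type*} [DecidableEq α] {L W : List (α × Bool)}

theorem isReduced_invRev (hL : FreeGroup.IsReduced L) : FreeGroup.IsReduced (invRev L) := by
  rw [← hL.reduce_eq, ← toWord_mk, ← toWord_inv]
  exact isReduced_toWord

theorem toWord_inv_mk_take_mul_mk_take (hW : FreeGroup.IsReduced W) {i j : ℕ} (hij : i ≤ j) :
    ((mk (W.take i))⁻¹ * mk (W.take j)).toWord = (W.drop i).take (j - i) := by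
  obtain ⟨k, rfl⟩ := Nat.exists_eq_add_of_le hij
  rw [List.take_add, ← mul_mk, inv_mul_cancel_left, toWord_mk, Nat.add_sub_cancel_left,
    (hW.infix ((List.take_prefix _ _).isInfix.trans (List.drop_suffix _ _).isInfix)).reduce_eq]

theorem norm_inv_mk_take_mul_mk_take (hW : FreeGroup.IsReduced W) {i j : ℕ}
    (hi : i ≤ W.length) (hj : j ≤ W.length) :
    FreeGroup.norm ((mk (W.take i))⁻¹ * mk (W.take j)) = max i j - min i j := by
  rcases le_total i j with hij | hji
  · rw [FreeGroup.norm, toWord_inv_mk_take_mul_mk_take hW hij]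
    simp only [List.length_take, List.length_drop]
    omega
  · rw [← norm_inv_eq, mul_inv_rev, inv_inv, FreeGroup.norm,
      toWord_inv_mk_take_mul_mk_take hW hji]
    simp only [List.length_take, List.length_drop]
    omega

theorem eq_of_mk_take_eq (hW : FreeGroup.IsReduced W) {i j : ℕ} (hi : i ≤ W.length)
    (hj : j ≤ W.length) (h : mk (W.take i) = mk (W.take j)) : i = j := by
  have := norm_inv_mk_take_mul_mk_take hW hi hj
  rw [h, inv_mul_cancel, FreeGroup.norm_one] at this
  omega

theorem eq_of_inv_mk_take_mul_eq (hW : FreeGroup.IsReduced W) (hsq : SquareFree W)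
    {i j k : ℕ} (hij : i ≤ j) (hjk : j ≤ k) (hk : k ≤ W.length)
    (h : (mk (W.take i))⁻¹ * mk (W.take j) = (mk (W.take j))⁻¹ * mk (W.take k)) : i = j := by
  have hseg := congrArg toWord h
  rw [toWord_inv_mk_take_mul_mk_take hW hij, toWord_inv_mk_take_mul_mk_take hW hjk] at hseg
  have hlen := congrArg List.length hseg
  simp only [List.length_take, List.length_drop] at hlen
  have := hsq i (j - i) (by omega) fun t ht => by
    have := congrArg (·[t]?) hseg
    simp only [List.getElem?_take, List.getElem?_drop, ht, if_true,
      show t < k - j by omega] at this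
    rwa [Nat.add_sub_cancel' hij]
  omega

theorem eq_of_mk_take_eq_mul (hW : FreeGroup.IsReduced W) (hsq : SquareFree W) {p₀ p₁ p₂ : ℕ}
    (h₀ : p₀ ≤ W.length) (h₁ : p₁ ≤ W.length) (h₂ : p₂ ≤ W.length) {g : FreeGroup α}
    (e₁ : mk (W.take p₁) = mk (W.take p₀) * g) (e₂ : mk (W.take p₂) = mk (W.take p₁) * g) :
    p₁ = p₀ := by
  suffices g = 1 from eq_of_mk_take_eq hW h₁ h₀ (by rw [e₁, this, mul_one])
  have hg₁ : (mk (W.take p₀))⁻¹ * mk (W.take p₁) = g := by rw [e₁, inv_mul_cancel_left]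
  have hg₂ : (mk (W.take p₁))⁻¹ * mk (W.take p₂) = g := by rw [e₂, inv_mul_cancel_left]
  have hdist := norm_inv_mk_take_mul_mk_take hW h₀ h₁
  rw [hg₁, ← hg₂, norm_inv_mk_take_mul_mk_take hW h₁ h₂] at hdist
  by_cases h02 : p₀ = p₂
  · subst h02
    rw [e₁, mul_assoc, left_eq_mul, ← sq] at e₂
    exact (pow_eq_one_iff_left two_ne_zero).mp e₂
  rcases le_total p₀ p₁ with h01 | h10
  · obtain rfl := eq_of_inv_mk_take_mul_eq hW hsq h01 (by omega) h₂ (hg₁.trans hg₂.symm)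
    simpa using e₁
  · have h21 : p₂ ≤ p₁ := by omega
    have hinv : (mk (W.take p₂))⁻¹ * mk (W.take p₁) = (mk (W.take p₁))⁻¹ * mk (W.take p₀) := by
      simpa using congrArg (·⁻¹) (hg₂.trans hg₁.symm)
    obtain rfl := eq_of_inv_mk_take_mul_eq hW hsq h21 h10 h₀ hinv
    simpa using e₂

end Prefixes

theorem getElem?_flatten_of_length_eq {α : Type*} {L i : ℕ} (hi : i < L) :
    ∀ {F : List (List α)}, (∀ B ∈ F, B.length = L) → ∀ k, F.flatten[k * L + i]? = F[k]?.bind (·[i]?)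
  | [], _, k => by simp
  | B :: F, hF, 0 => by
    simp [List.getElem?_append_left ((hF B List.mem_cons_self).symm ▸ hi)]
  | B :: F, hF, k + 1 => by
    have hB := hF B List.mem_cons_self
    rw [List.flatten_cons, List.getElem?_append_right (by rw [hB]; nlinarith), hB,
      show (k + 1) * L + i - L = k * L + i by rw [Nat.add_one_mul]; omega,
      getElem?_flatten_of_length_eq hi (fun C hC => hF C (List.mem_cons_of_mem B hC)) k]
    rfl

section Arithmetic

theorem mod_ne_add_one_mod {n : ℕ} (hn : 2 ≤ n) (m : ℕ) : m % n ≠ (m + 1) % n := fun h => by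
  have := Nat.le_of_dvd one_pos (by simpa using (Nat.modEq_iff_dvd' (Nat.le_succ m)).mp h)
  omega

theorem dvd_div_of_div_mod_eq {n L x d : ℕ} (hL : 0 < L) (h : x / L % n = (x + d) / L % n) :
    n ∣ (x % L + d) / L := by
  have hx : (x + d) / L = x / L + (x % L + d) / L := by
    conv_lhs => rw [← Nat.mod_add_div x L]
    rw [add_right_comm, Nat.add_mul_div_left _ _ hL, add_comm]
  rw [hx] at h
  exact Nat.modEq_zero_iff_dvd.mp <| Nat.ModEq.add_left_cancel' (x / L) <| by
    rw [add_zero]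
    exact h.symm

theorem mod_add_two_mul_le_of_lt {n L a d : ℕ} (hn : 2 ≤ n) (hL : 0 < L) (hd : 0 < d)
    (hdL : d < L) (hdvd : ∀ x, a ≤ x → x < a + d → n ∣ (x % L + d) / L) :
    a % L + 2 * d ≤ L := by
  have hlt x (h₁ : a ≤ x) (h₂ : x < a + d) : x % L + d < L := by
    have hq : (x % L + d) / L < n :=
      (Nat.div_lt_iff_lt_mul hL).mpr (by have := Nat.mod_lt x hL; nlinarith)
    have := Nat.eq_zero_of_dvd_of_lt (hdvd x h₁ h₂) hq
    rwa [Nat.div_eq_zero_iff, or_iff_right hL.ne'] at this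
  have ha := Nat.mod_add_div a L
  have hlast : (a + d - 1) % L = a % L + (d - 1) := by
    rw [show a + d - 1 = a % L + (d - 1) + L * (a / L) by omega, Nat.add_mul_mod_self_left,
      Nat.mod_eq_of_lt (by have := hlt a le_rfl (by omega); omega)]
  have := hlt (a + d - 1) (by omega) (by omega)
  omega

theorem eq_zero_and_eq_mul_of_le {n L a d : ℕ} (hn : 2 ≤ n) (hL : 0 < L) (hLd : L ≤ d)
    (hlen : a + 2 * d ≤ 2 * n * L) (hdvd : ∀ x, a ≤ x → x < a + d → n ∣ (x % L + d) / L) :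
    a = 0 ∧ d = n * L := by
  have ha := Nat.mod_add_div a L
  have haL := Nat.mod_lt a hL
  -- the last position of the block containing `a`
  set x₁ := L * (a / L) + (L - 1) with hx₁
  have hx₁L : x₁ % L = L - 1 := by
    rw [hx₁, Nat.mul_add_mod, Nat.mod_eq_of_lt (by omega)]
  have hd₁ := hdvd x₁ (by omega) (by omega)
  rw [hx₁L] at hd₁
  by_cases hdvdL : L ∣ d
  · obtain ⟨e, rfl⟩ := hdvdL
    have he : n ∣ e := by
      simpa [Nat.add_mul_div_left _ _ hL, Nat.div_eq_of_lt haL] using hdvd a le_rfl (by omega)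
    have hle : n ≤ e := Nat.le_of_dvd (Nat.pos_of_ne_zero (by rintro rfl; omega)) he
    have : L * n ≤ L * e := Nat.mul_le_mul_left L hle
    constructor <;> nlinarith
  · exfalso
    have hd₂ := hdvd (x₁ + 1) (by omega) (by
      have : d ≠ L := by rintro rfl; exact hdvdL dvd_rfl
      omega)
    rw [show x₁ + 1 = L * (a / L + 1) by rw [Nat.mul_add_one]; omega, Nat.mul_mod_right,
      zero_add] at hd₂
    have hsucc : (L - 1 + d) / L = d / L + 1 := by
      have hdm := Nat.mod_add_div d L
      have : d % L ≠ 0 := fun h => hdvdL (Nat.dvd_of_mod_eq_zero h)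
      rw [show L - 1 + d = (d % L - 1) + L * (d / L + 1) by rw [Nat.mul_add_one]; omega,
        Nat.add_mul_div_left _ _ hL, Nat.div_eq_of_lt (by have := Nat.mod_lt d hL; omega),
        zero_add]
    rw [hsucc] at hd₁
    have := Nat.le_of_dvd one_pos ((Nat.dvd_add_right hd₂).mp hd₁)
    omega

/-- Cut `[0, 2nL)` into `2n` blocks of length `L` and colour the `k`-th block by `k % n`. If the
shift by `d` preserves colours on `[a, a + d)`, then `[a, a + 2d)` lies inside one block or is
all of `[0, 2nL)`. -/
theorem mod_add_two_mul_le_or_of_periodic {n L a d : ℕ} (hn : 2 ≤ n) (hL : 0 < L) (hd : 0 < d)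
    (hlen : a + 2 * d ≤ 2 * n * L)
    (hper : ∀ x, a ≤ x → x < a + d → x / L % n = (x + d) / L % n) :
    a % L + 2 * d ≤ L ∨ (a = 0 ∧ d = n * L) :=
  have hdvd x h₁ h₂ := dvd_div_of_div_mod_eq hL (hper x h₁ h₂)
  (lt_or_ge d L).imp (mod_add_two_mul_le_of_lt hn hL hd · hdvd)
    (eq_zero_and_eq_mul_of_le hn hL · hlen hdvd)

end Arithmetic

section Extend

variable {n : ℕ} {V : List (List ℕ × Bool)}

def appendIndex (k : ℕ) (p : List ℕ × Bool) : List ℕ × Bool := (p.1 ++ [k], p.2)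

theorem appendIndex_injective (k : ℕ) : (appendIndex k).Injective := fun p q h => by
  simpa [appendIndex, Prod.ext_iff] using h

def block (n : ℕ) (V : List (List ℕ × Bool)) (k : ℕ) : List (List ℕ × Bool) :=
  if k < n then V.map (appendIndex k) else invRev (V.map (appendIndex (k - n)))

/-- `extend n V` is `V₀ ⋯ Vₙ₋₁ V₀⁻¹ ⋯ Vₙ₋₁⁻¹`, where `Vⱼ` is `V` with `j` appended to every index.
`w_n^{(1)}` is `extend n` of the one-letter word whose index is empty. -/
def extend (n : ℕ) (V : List (List ℕ × Bool)) : List (List ℕ × Bool) :=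
  ((List.range (2 * n)).map (block n V)).flatten

@[simp]
theorem length_block (k : ℕ) : (block n V k).length = V.length := by
  unfold block
  split_ifs <;> simp

theorem length_extend : (extend n V).length = 2 * n * V.length := by
  simp [extend, List.length_flatten, Function.comp_def]

theorem getElem?_extend {k i : ℕ} (hk : k < 2 * n) (hi : i < V.length) :
    (extend n V)[k * V.length + i]? = (block n V k)[i]? := by
  rw [extend, getElem?_flatten_of_length_eq hi (by simp)]
  simp [hk]

theorem getLast?_fst_of_mem_block {k : ℕ} (hk : k < 2 * n) {p : List ℕ × Bool}
    (hp : p ∈ block n V k) : p.1.getLast? = some (k % n) := by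
  unfold block at hp
  split_ifs at hp with hkn
  · obtain ⟨q, -, rfl⟩ := List.mem_map.mp hp
    simp [appendIndex, Nat.mod_eq_of_lt hkn]
  · simp only [invRev, List.mem_reverse, List.map_map, List.mem_map] at hp
    obtain ⟨q, -, rfl⟩ := hp
    simp [appendIndex, Nat.mod_eq_sub_mod (not_lt.mp hkn), Nat.mod_eq_of_lt (by omega : k - n < n)]

theorem getLast?_fst_of_getElem?_extend {x : ℕ} {p : List ℕ × Bool}
    (hp : (extend n V)[x]? = some p) : p.1.getLast? = some (x / V.length % n) := by
  have hx : x < 2 * n * V.length :=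
    length_extend (n := n) (V := V) ▸ (List.getElem?_eq_some_iff.mp hp).1
  have hL : 0 < V.length := Nat.pos_of_ne_zero (by rintro h; simp [h] at hx)
  have hk : x / V.length < 2 * n := Nat.div_lt_of_lt_mul (by linarith [mul_comm (2 * n) V.length])
  rw [← Nat.div_add_mod' x V.length, getElem?_extend hk (Nat.mod_lt _ hL)] at hp
  exact getLast?_fst_of_mem_block hk (List.mem_of_getElem? hp)

theorem isReduced_block (hV : FreeGroup.IsReduced V) (k : ℕ) :
    FreeGroup.IsReduced (block n V k) := by
  have hmap j : FreeGroup.IsReduced (V.map (appendIndex j)) :=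
    (List.isChain_map _).mpr (hV.imp fun a b hab h => hab (List.append_cancel_right h))
  unfold block
  split_ifs
  exacts [hmap _, isReduced_invRev (hmap _)]

theorem squareFree_block (hV : SquareFree V) (k : ℕ) : SquareFree (block n V k) := by
  unfold block
  split_ifs
  exacts [hV.map (appendIndex_injective _), (hV.map (appendIndex_injective _)).invRev]

theorem isCyclicallyReduced_extend (hn : 2 ≤ n) (hV : FreeGroup.IsReduced V) :
    IsCyclicallyReduced (extend n V) := by
  rcases V.length.eq_zero_or_pos with hL | hL
  · rw [List.eq_nil_of_length_eq_zero (l := extend n V) (by rw [length_extend, hL, mul_zero])]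
    exact .nil
  -- letters in consecutive blocks, and the first and last letters, have different last indices
  have hdiff {x y : List ℕ × Bool} {k : ℕ} (hx : x.1.getLast? = some (k % n))
      (hy : y.1.getLast? = some ((k + 1) % n)) : x.1 = y.1 → x.2 = y.2 := fun h => by
    rw [h, hy, Option.some_inj] at hx
    exact absurd hx.symm (mod_ne_add_one_mod hn k)
  refine ⟨(List.isChain_flatten (by simp [← List.length_eq_zero_iff, hL.ne'])).mpr
    ⟨fun B hB => ?_, ?_⟩, ?_⟩
  · obtain ⟨k, -, rfl⟩ := List.mem_map.mp hB
    exact isReduced_block hV k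
  · rw [List.isChain_map, List.isChain_range]
    intro k hk x hx y hy
    exact hdiff (getLast?_fst_of_mem_block (by omega) (List.mem_of_getLast? hx))
      (getLast?_fst_of_mem_block (by omega) (List.mem_of_mem_head? hy))
  · intro x hx y hy
    rw [List.getLast?_eq_getElem?, length_extend] at hx
    rw [List.head?_eq_getElem?] at hy
    have : V.length ≤ 2 * n * V.length := Nat.le_mul_of_pos_left _ (by omega)
    have hlast : (2 * n * V.length - 1) / V.length = 2 * n - 1 :=
      Nat.div_eq_of_lt_le (by rw [Nat.sub_mul]; omega)
        (by rw [Nat.sub_add_cancel (by omega)]; omega)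
    refine hdiff (k := 2 * n - 1) ?_ ?_
    · simpa [hlast] using getLast?_fst_of_getElem?_extend hx
    · simpa [Nat.sub_add_cancel (by omega : 1 ≤ 2 * n)] using getLast?_fst_of_getElem?_extend hy

theorem getElem?_zero_extend (hn : 0 < n) (hL : 0 < V.length) :
    (extend n V)[0]? = V.head?.map (appendIndex 0) := by
  simpa [block, hn, List.head?_eq_getElem?] using getElem?_extend (n := n) (k := 0) (by omega) hL

theorem getElem?_mul_length_extend (hn : 0 < n) (hL : 0 < V.length) :
    (extend n V)[n * V.length]? = V.getLast?.map fun p => (p.1 ++ [0], !p.2) := by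
  have := getElem?_extend (n := n) (V := V) (k := n) (by omega) hL
  rw [add_zero] at this
  rw [this, block, if_neg (lt_irrefl n), Nat.sub_self, invRev, List.getElem?_reverse (by simpa),
    List.getLast?_eq_getElem?]
  simp [appendIndex, Function.comp_def]

theorem getElem?_zero_extend_ne (hn : 0 < n) (hV : IsCyclicallyReduced V) (hL : 0 < V.length) :
    (extend n V)[0]? ≠ (extend n V)[n * V.length]? := by
  have hne : V ≠ [] := List.ne_nil_of_length_pos hL
  rw [getElem?_zero_extend hn hL, getElem?_mul_length_extend hn hL,
    List.head?_eq_some_head hne, List.getLast?_eq_some_getLast hne]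
  simp only [Option.map_some, ne_eq, Option.some_inj, appendIndex, Prod.mk.injEq,
    List.append_cancel_right_eq, not_and]
  intro h₁ h₂
  have := hV.2 _ (List.getLast?_eq_some_getLast hne) _ (List.head?_eq_some_head hne) h₁.symm
  simp [h₂] at this

theorem squareFree_extend (hn : 2 ≤ n) (hV : IsCyclicallyReduced V) (hsq : SquareFree V) :
    SquareFree (extend n V) := by
  intro a d hlen hsquare
  rcases d.eq_zero_or_pos with hd | hd
  · exact hd
  rw [length_extend] at hlen
  have hL : 0 < V.length := Nat.pos_of_ne_zero fun h => by simp [h] at hlen; omega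
  have hper x (h₁ : a ≤ x) (h₂ : x < a + d) : x / V.length % n = (x + d) / V.length % n := by
    obtain ⟨p, hp⟩ : ∃ p, (extend n V)[x]? = some p :=
      ⟨_, List.getElem?_eq_getElem (by rw [length_extend]; omega)⟩
    have hpd : (extend n V)[x + d]? = some p := by
      have := hsquare (x - a) (by omega)
      rwa [Nat.add_sub_cancel' h₁, add_right_comm, Nat.add_sub_cancel' h₁, hp, eq_comm] at this
    exact Option.some_injective _
      ((getLast?_fst_of_getElem?_extend hp).symm.trans (getLast?_fst_of_getElem?_extend hpd))
  rcases mod_add_two_mul_le_or_of_periodic hn hL hd hlen hper with hin | ⟨rfl, rfl⟩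
  · have hk : a / V.length < 2 * n :=
      Nat.div_lt_of_lt_mul (by linarith [mul_comm (2 * n) V.length])
    have hpos t (ht : t < 2 * d) : (extend n V)[a + t]? =
        (block n V (a / V.length))[a % V.length + t]? := by
      rw [← getElem?_extend hk (by omega), ← add_assoc, Nat.div_add_mod']
    refine squareFree_block (n := n) hsq (a / V.length) (a % V.length) d
      (by rw [length_block]; omega) fun i hi => ?_
    rw [← hpos i (by omega), add_assoc, ← hpos (d + i) (by omega), ← add_assoc]
    exact hsquare i hi
  · have h₀ := hsquare 0 hd
    rw [add_zero, zero_add, add_zero] at h₀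
    exact absurd h₀ (getElem?_zero_extend_ne (by omega) hV hL)

end Extend

theorem extend_eq (n : ℕ) (V : List (List ℕ × Bool)) :
    extend n V = ((List.range n).map fun j => V.map (appendIndex j)).flatten
      ++ ((List.range n).map fun j => invFree (V.map (appendIndex j))).flatten := by
  rw [extend, two_mul, List.range_add, List.map_append, List.flatten_append, List.map_map]
  congr 2 <;> refine List.map_congr_left fun j hj => ?_ <;> simp_all [block, invFree, invRev,
    List.map_reverse]

theorem wLetters_one (n : ℕ) : wLetters n 1 = extend n [([], false)] := by
  simp [extend_eq, wLetters, appendIndex, invFree, ← List.flatMap_def, ← List.map_eq_flatMap]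

theorem wLetters_add_two (n h : ℕ) : wLetters n (h + 2) = extend n (wLetters n (h + 1)) := by
  rw [extend_eq]
  rfl

theorem isCyclicallyReduced_wLetters_and_squareFree {n : ℕ} (hn : 2 ≤ n) :
    ∀ h, IsCyclicallyReduced (wLetters n h) ∧ SquareFree (wLetters n h)
  | 0 => ⟨.nil, fun _ _ hlen _ => by simp [wLetters] at hlen; omega⟩
  | 1 => by
    rw [wLetters_one]
    exact ⟨isCyclicallyReduced_extend hn IsReduced.singleton,
      squareFree_extend hn .singleton fun _ _ hlen _ => by simp at hlen; omega⟩
  | h + 2 => by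
    obtain ⟨hred, hsq⟩ := isCyclicallyReduced_wLetters_and_squareFree hn (h + 1)
    rw [wLetters_add_two]
    exact ⟨isCyclicallyReduced_extend hn hred.isReduced, squareFree_extend hn hred hsq⟩

theorem mk_take_of_chi_eq_some {n h : ℕ} {v : List ℕ} {q q' : Fin ((wLetters n h).length + 1)}
    (hq : chi n h v q = some q') :
    mk ((wLetters n h).take q') = mk ((wLetters n h).take q) * mk [(v, false)] := by
  unfold chi at hq
  split_ifs at hq with h₁ h₂
  · rw [← Option.some_inj.mp hq, List.take_add_one, h₁.2, Option.toList_some, mul_mk]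
  · have hinv : mk [(v, true)] = (mk [(v, false)])⁻¹ := by
      rw [inv_mk]
      rfl
    rw [← Option.some_inj.mp hq]
    show mk ((wLetters n h).take (q - 1)) = _
    conv_rhs => rw [← Nat.sub_add_cancel h₂.1]
    rw [List.take_add_one, h₂.2, Option.toList_some, ← mul_mk, hinv, inv_mul_cancel_right]

theorem SnhMem.exists_mk_take_eq_mul {n h : ℕ} {f : PTrans n h} (hf : SnhMem n h f) :
    ∃ g : FreeGroup (List ℕ), ∀ q q', f q = some q' →
      mk ((wLetters n h).take q') = mk ((wLetters n h).take q) * g := by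
  induction hf with
  | gen v => exact ⟨_, fun q q' hq => mk_take_of_chi_eq_some hq⟩
  | geninv v =>
    refine ⟨(mk [(v, false)])⁻¹, fun q q' hq => ?_⟩
    have hchi : chi n h v q' = some q := by simpa using List.find?_some hq
    rw [mk_take_of_chi_eq_some hchi, mul_inv_cancel_right]
  | mul f g _ _ ihf ihg =>
    obtain ⟨a, ha⟩ := ihf
    obtain ⟨b, hb⟩ := ihg
    refine ⟨b * a, fun q q' hq => ?_⟩
    obtain ⟨m, hm, hm'⟩ := Option.bind_eq_some_iff.mp hq
    rw [ha m q' hm', hb q m hm, mul_assoc]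

theorem pcomp_self_eq_pcomp_pcomp_self {α : Type*} {f : α → Option α}
    (hf : ∀ q q₁ q₂, f q = some q₁ → f q₁ = some q₂ → q₁ = q) :
    pcomp f f = pcomp (pcomp f f) f := by
  funext q
  show (f q).bind f = (f q).bind fun q₁ => (f q₁).bind f
  rcases h₁ : f q with _ | q₁
  · rfl
  show f q₁ = (f q₁).bind f
  rcases h₂ : f q₁ with _ | q₂
  · rfl
  have hq₁ : q₁ = q := hf q q₁ q₂ h₁ h₂
  have hq₂ : q₂ = q₁ := by rw [← Option.some_inj, ← h₂, hq₁, h₁, hq₁]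
  rw [Option.bind_some, hq₂, h₂, hq₂]

end Kadourek

theorem kadourek_sq_eq_cube_general (n h : ℕ) (hn : 2 ≤ n) :
    ∀ f : PTrans n h, SnhMem n h f → pcomp f f = pcomp (pcomp f f) f := by
  intro f hf
  obtain ⟨g, hg⟩ := Kadourek.SnhMem.exists_mk_take_eq_mul hf
  obtain ⟨hred, hsq⟩ := Kadourek.isCyclicallyReduced_wLetters_and_squareFree hn h
  refine Kadourek.pcomp_self_eq_pcomp_pcomp_self fun q q₁ q₂ h₁ h₂ => Fin.ext ?_
  exact Kadourek.eq_of_mk_take_eq_mul hred.isReduced hsq q.is_le q₁.is_le q₂.is_le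
    (hg q q₁ h₁) (hg q₁ q₂ h₂)

/-- For all `n ≥ 2` and `h ≥ 1`, every element `s` of the Kadourek inverse
semigroup `S_n^{(h)}` satisfies `s² = s³`. -/
theorem kadourek_sq_eq_cube (n h : ℕ) (hn : 2 ≤ n) (hh : 1 ≤ h) :
    ∀ f : PTrans n h, SnhMem n h f → pcomp f f = pcomp (pcomp f f) f :=
  kadourek_sq_eq_cube_general n h hn
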